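/- arXiv:2012.01418 — 4 statements merged into one kernel-verified Lean document; each statement's English description precedes it below -/
import Mathlib

section
/- Let 𝒳 and 𝒲 be finite types, n ∈ ℕ, let μ be an exchangeable probability mass function on Fin n → 𝒳, let ν be a probability mass function on 𝒲, and let F : 𝒳 → 𝒲 → 𝒳. Define the next-state PMF μ' on Fin n → 𝒳 as the law of the profile i ↦ F(x i)(w i), where x is drawn from μ and w : Fin n → 𝒲 has i.i.d. coordinates each drawn from ν, independently of x. Then μ' is exchangeable: μ'(x' ∘ σ) = μ'(x') for every profile x' and every permutation σ of Fin n. -/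
/-!
Relabelling the agents by `σ` maps the pair (state profile, noise profile) to itself in law:
the state law by exchangeability, the i.i.d. noise law since a product is invariant under
permuting its factors. The coordinatewise update commutes with relabelling, so the next-state
law is invariant as well; in the sums this is the change of variables `x ↦ x ∘ σ`, `w ↦ w ∘ σ`.
-/

/-- The i.i.d. product PMF on `Fin n → W` with marginal `ν`. -/
noncomputable def iid {W : Type*} [Fintype W] (n : ℕ) (ν : PMF W) : PMF (Fin n → W) :=
  PMF.ofFintype (fun w => ∏ i, ν (w i)) (by
    have h : ∑ j : W, ν j = 1 := by rw [← ν.tsum_coe, tsum_fintype]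
    rw [← Fintype.prod_sum]; simp [h])

theorem tsum_comp_perm {ι α M : Type*} [AddCommMonoid M] [TopologicalSpace M]
    (f : (ι → α) → M) (σ : Equiv.Perm ι) : ∑' x, f (x ∘ σ) = ∑' x, f x :=
  (Equiv.arrowCongr σ.symm (Equiv.refl α)).tsum_eq f

namespace PMF

variable {ι α β : Type*}

def IsExchangeable (p : PMF (ι → α)) : Prop :=
  ∀ (x : ι → α) (σ : Equiv.Perm ι), p (x ∘ σ) = p x

theorem map_apply_comp_perm {p : PMF (ι → α)} (hp : p.IsExchangeable) (σ : Equiv.Perm ι)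
    {g h : (ι → α) → ι → β} (hgh : ∀ w, h (w ∘ σ) = g w ∘ σ) (y : ι → β) :
    p.map h (y ∘ σ) = p.map g y := by
  simp only [map_apply]
  rw [← tsum_comp_perm _ σ]
  refine tsum_congr fun w => ?_
  rw [hgh, hp, σ.surjective.injective_comp_right.eq_iff]

theorem bind_apply_comp_perm {p : PMF (ι → α)} (hp : p.IsExchangeable) (σ : Equiv.Perm ι)
    {κ : (ι → α) → PMF (ι → β)} (hκ : ∀ x y, κ (x ∘ σ) (y ∘ σ) = κ x y) (y : ι → β) :
    p.bind κ (y ∘ σ) = p.bind κ y := by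
  simp only [bind_apply]
  rw [← tsum_comp_perm _ σ]
  exact tsum_congr fun x => by rw [hp, hκ]

end PMF

theorem iid_isExchangeable {W : Type*} [Fintype W] (n : ℕ) (ν : PMF W) :
    (iid n ν).IsExchangeable := fun w σ => by
  simp only [iid, PMF.ofFintype_apply, Function.comp_apply]
  exact Equiv.prod_comp σ fun i => ν (w i)

theorem stmt2_general {X W : Type*} [Fintype W] {n : ℕ}
    (μ : PMF (Fin n → X)) (ν : PMF W) (F : X → W → X)
    (hexch : ∀ (x : Fin n → X) (σ : Equiv.Perm (Fin n)), μ (x ∘ σ) = μ x) :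
    ∀ (x' : Fin n → X) (σ : Equiv.Perm (Fin n)),
      (μ.bind fun x => (iid n ν).map fun w => fun i => F (x i) (w i)) (x' ∘ σ) =
      (μ.bind fun x => (iid n ν).map fun w => fun i => F (x i) (w i)) x' := fun x' σ =>
  PMF.bind_apply_comp_perm hexch σ
    (fun _ y => PMF.map_apply_comp_perm (iid_isExchangeable n ν) σ (fun _ => rfl) y) x'

/-- If `μ` is exchangeable, then the law of the profile `i ↦ F (x i) (w i)`, where `x ~ μ` and
`w` is an independent i.i.d. noise vector with marginal `ν`, is again exchangeable. -/
theorem stmt2 {X W : Type*} [Fintype X] [Fintype W] {n : ℕ}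
    (μ : PMF (Fin n → X)) (ν : PMF W) (F : X → W → X)
    (hexch : ∀ (x : Fin n → X) (σ : Equiv.Perm (Fin n)), μ (x ∘ σ) = μ x) :
    ∀ (x' : Fin n → X) (σ : Equiv.Perm (Fin n)),
      (μ.bind fun x => (iid n ν).map fun w => fun i => F (x i) (w i)) (x' ∘ σ) =
      (μ.bind fun x => (iid n ν).map fun w => fun i => F (x i) (w i)) x' :=
  stmt2_general μ ν F hexch
end

section
/- Let 𝒳 and 𝒲 be finite types, n ∈ ℕ, ν a probability mass function on 𝒲, and F : 𝒳 → 𝒲 → 𝒳. If two profiles x, y : Fin n → 𝒳 satisfy emp(x) = emp(y), then the random empirical count vectors emp(i ↦ F(x i)(W i)) and emp(i ↦ F(y i)(W i)), where W : Fin n → 𝒲 has i.i.d. coordinates each with PMF ν, have the same distribution: for every count vector m' : 𝒳 → ℕ, the ν^n-probability of {w : emp(i ↦ F(x i)(w i)) = m'} equals the ν^n-probability of {w : emp(i ↦ F(y i)(w i)) = m'}. -/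
open scoped ENNReal

/-- The empirical count vector of a profile `x : Fin n → X`. -/
def emp {X : Type*} [DecidableEq X] {n : ℕ} (x : Fin n → X) : X → ℕ :=
  fun a => (Finset.univ.filter (fun i => x i = a)).card

/-!
Profiles with the same empirical count vector differ by a permutation `σ` of the coordinates:
match the fibres `{i | x i = a}` and `{i | y i = a}`, which have the same size, bijectively.
Reindexing the noise by `w ↦ w ∘ σ` preserves the product measure `ν^n` and carries the event
for `y` onto the event for `x`, because counting is invariant under permutations.
-/

section Empirical

variable {X : Type*} [DecidableEq X] {n : ℕ}

lemma emp_apply_eq_card_subtype (x : Fin n → X) (a : X) :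
    emp x a = Fintype.card {i // x i = a} :=
  (Fintype.card_subtype _).symm

lemma emp_comp_perm (x : Fin n → X) (σ : Equiv.Perm (Fin n)) : emp (x ∘ σ) = emp x := by
  funext a
  simp only [emp_apply_eq_card_subtype]
  exact Fintype.card_congr (σ.subtypeEquiv fun _ => Iff.rfl)

lemma exists_perm_comp_eq_of_emp_eq {x y : Fin n → X} (h : emp x = emp y) :
    ∃ σ : Equiv.Perm (Fin n), x ∘ σ = y := by
  have fiberEquiv (a : X) : {i // y i = a} ≃ {i // x i = a} :=
    Fintype.equivOfCardEq (by rw [← emp_apply_eq_card_subtype, ← emp_apply_eq_card_subtype, h])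
  exact ⟨Equiv.ofFiberEquiv fiberEquiv, funext (Equiv.ofFiberEquiv_map fiberEquiv)⟩

end Empirical

lemma iid_comp_perm {W : Type*} [Fintype W] {n : ℕ} (ν : PMF W) (w : Fin n → W)
    (σ : Equiv.Perm (Fin n)) : iid n ν (w ∘ σ) = iid n ν w :=
  Equiv.prod_comp σ (fun i => ν (w i))

/-- If `emp x = emp y`, then the random empirical count vectors of `i ↦ F (x i) (W i)` and
`i ↦ F (y i) (W i)` (with `W` i.i.d. with marginal `ν`) have the same distribution. -/
theorem stmt3 {X W : Type*} [Fintype X] [DecidableEq X] [Fintype W] {n : ℕ}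
    (ν : PMF W) (F : X → W → X) (x y : Fin n → X) (hxy : emp x = emp y) :
    ∀ m' : X → ℕ,
      (∑ w ∈ Finset.univ.filter (fun w : Fin n → W => emp (fun i => F (x i) (w i)) = m'),
        iid n ν w) =
      (∑ w ∈ Finset.univ.filter (fun w : Fin n → W => emp (fun i => F (y i) (w i)) = m'),
        iid n ν w) := by
  intro m'
  obtain ⟨σ, rfl⟩ := exists_perm_comp_eq_of_emp_eq hxy
  rw [Finset.sum_filter, Finset.sum_filter]
  refine Fintype.sum_equiv (σ.symm.arrowCongr (Equiv.refl W)) _ _ fun w => ?_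
  have hreindex : σ.symm.arrowCongr (Equiv.refl W) w = w ∘ σ := rfl
  rw [hreindex, iid_comp_perm]
  congr 2
  exact (emp_comp_perm (fun i => F (x i) (w i)) σ).symm
end

section
/- (Theorem 2 of the paper; dynamic program for partially observed mean-field sharing.) Let M, Y, N be finite types, Γ a finite nonempty type of prescriptions, T ∈ ℕ. Let μ_1 be a PMF on M (law of Z_1), K_t : M → Γ → PMF M transition kernels, c_t : M → Γ → ℝ per-step costs, h_t : M → N → Y observation functions, ν_t PMFs on N. The process: Z_1 ~ μ_1; at each t the controller observes Y_t = h_t(Z_t, N_t) with N_t ~ ν_t independent of everything else, chooses Γ_t = ψ_t(Y_{1:t}) ∈ Γ, and Z_{t+1} ~ K_t(Z_t, Γ_t). For a belief π ∈ PMF M and γ ∈ Γ define c̃_t(π, γ) := ∑_z π(z) c_t(z, γ), the predicted observation probability P_t(y | π, γ) := ∑_{z'} (∑_z π(z) K_t(z, γ)(z')) · ∑_{n : h_{t+1}(z', n) = y} ν_{t+1}(n), and the Bayes update φ_t(π, γ, y) ∈ PMF M by φ_t(π, γ, y)(z') = (∑_{n : h_{t+1}(z', n) = y} ν_{t+1}(n))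 · (∑_z π(z) K_t(z, γ)(z')) / P_t(y | π, γ) whenever P_t(y | π, γ) > 0. Define V_{T+1} ≡ 0 on PMF M and, for t = T,…,1, V_t(π) := min_{γ ∈ Γ} [c̃_t(π, γ) + ∑_{y : P_t(y | π, γ) > 0} P_t(y | π, γ) · V_{t+1}(φ_t(π, γ, y))]. Then: (i) for every strategy ψ with ψ_t : Y^t → Γ, the expected total cost E[∑_{t=1}^T c_t(Z_t, Γ_t)] is at least E[V_1(Π_1)], where Π_1 is the posterior belief on Z_1 given Y_1; and (ii) any strategy choosing, at each t, a γ attaining the minimum at the current belief Π_t achieves this lower bound. Hence there is no loss of optimality in strategies of the form Γ_t = ψ_t(Π_t). -/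
/-!
Let `jointProb t ys z` be the probability that the observations up to time `t` are `ys` and
that `Z_t = z`; it obeys the forward filtering recursion, so its normalisation `posterior t ys`
is the conditional law of `Z_t` given `ys` and evolves by the Bayes update `bayes`.
Averaging over observation histories, `E[c_t(Z_t, Γ_t)] = E[c̃_t(Π_t, Γ_t)]`, and the averaged
lookahead term of the dynamic program at `(Π_t, Γ_t)` is `E[V_{t+1}(Π_{t+1})]`. Since `V_t` is
a minimum over prescriptions, `E[V_t(Π_t)] ≤ E[c_t] + E[V_{t+1}(Π_{t+1})]`, with equality when
`Γ_t` attains the minimum on every history of positive probability (on which the belief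
process `Bel` agrees with the posterior). Telescoping from `V_T = 0` gives both claims.
-/

open scoped ENNReal

variable {M Y N G : Type*} [Fintype M] [DecidableEq M] [Fintype Y] [DecidableEq Y]
  [Fintype N] [Fintype G] [Nonempty G]

/-- Observation kernel: probability of observing `y` when the mean field is `z`,
under observation function `h t` and noise `ν t`. -/
noncomputable def obsP (h : ℕ → M → N → Y) (ν : ℕ → PMF N) (t : ℕ) (y : Y) (z : M) : ℝ≥0∞ :=
  ∑ nn ∈ Finset.univ.filter (fun nn => h t z nn = y), ν t nn

/-- Expected per-step cost under belief `π` and prescription `γ`. -/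
noncomputable def ctil (c : ℕ → M → G → ℝ) (t : ℕ) (π : M → ℝ≥0∞) (γ : G) : ℝ :=
  ∑ z : M, (π z).toReal * c t z γ

/-- Unnormalized predicted next-state distribution. -/
noncomputable def pred (K : ℕ → M → G → PMF M) (t : ℕ) (π : M → ℝ≥0∞) (γ : G) (z' : M) :
    ℝ≥0∞ :=
  ∑ z : M, π z * K t z γ z'

/-- Predicted probability of the next observation `y` under belief `π` and prescription `γ`. -/
noncomputable def Pobs (K : ℕ → M → G → PMF M) (h : ℕ → M → N → Y) (ν : ℕ → PMF N)
    (t : ℕ) (π : M → ℝ≥0∞) (γ : G) (y : Y) : ℝ≥0∞ :=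
  ∑ z' : M, pred K t π γ z' * obsP h ν (t + 1) y z'

/-- Bayes belief update `φ_t(π, γ, y)`. -/
noncomputable def bayes (K : ℕ → M → G → PMF M) (h : ℕ → M → N → Y) (ν : ℕ → PMF N)
    (t : ℕ) (π : M → ℝ≥0∞) (γ : G) (y : Y) : M → ℝ≥0∞ :=
  fun z' => obsP h ν (t + 1) y z' * pred K t π γ z' / Pobs K h ν t π γ y

/-- The dynamic-programming value functions on beliefs, with `V_T ≡ 0`. -/
noncomputable def V (T : ℕ) (K : ℕ → M → G → PMF M) (c : ℕ → M → G → ℝ)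
    (h : ℕ → M → N → Y) (ν : ℕ → PMF N) (t : ℕ) : (M → ℝ≥0∞) → ℝ :=
  if t < T then fun π =>
    Finset.univ.inf' Finset.univ_nonempty (fun γ : G =>
      ctil c t π γ +
        ∑ y ∈ Finset.univ.filter (fun y => 0 < Pobs K h ν t π γ y),
          (Pobs K h ν t π γ y).toReal * V T K c h ν (t + 1) (bayes K h ν t π γ y))
  else fun _ => 0
termination_by T - t

/-- Closed-loop law of the state-observation trajectory `((Z_0,Y_0), …, (Z_t,Y_t))` under an
observation-history-feedback strategy `ψ`. -/
noncomputable def histPO (μ1 : PMF M) (K : ℕ → M → G → PMF M) (h : ℕ → M → N → Y)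
    (ν : ℕ → PMF N) (ψ : (t : ℕ) → (Fin (t + 1) → Y) → G) :
    (t : ℕ) → PMF (Fin (t + 1) → (M × Y))
  | 0 => μ1.bind (fun z => (ν 0).map (fun nn => fun _ => (z, h 0 z nn)))
  | t + 1 =>
    (histPO μ1 K h ν ψ t).bind (fun tr =>
      (K t (tr (Fin.last t)).1 (ψ t (fun s => (tr s).2))).bind (fun z' =>
        (ν (t + 1)).map (fun nn => Fin.snoc tr (z', h (t + 1) z' nn))))

/-- Expected total cost of strategy `ψ` over horizon `T`. -/
noncomputable def Jpo (T : ℕ) (μ1 : PMF M) (K : ℕ → M → G → PMF M) (c : ℕ → M → G → ℝ)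
    (h : ℕ → M → N → Y) (ν : ℕ → PMF N) (ψ : (t : ℕ) → (Fin (t + 1) → Y) → G) : ℝ :=
  ∑ t ∈ Finset.range T, ∑ tr : Fin (t + 1) → (M × Y),
    (histPO μ1 K h ν ψ t tr).toReal * c t (tr (Fin.last t)).1 (ψ t (fun s => (tr s).2))

/-- The initial posterior belief `Π_1` on `Z_1` given the first observation `y`. -/
noncomputable def initBel (μ1 : PMF M) (h : ℕ → M → N → Y) (ν : ℕ → PMF N) (y : Y) :
    M → ℝ≥0∞ :=
  fun z => obsP h ν 0 y z * μ1 z / ∑ z' : M, obsP h ν 0 y z' * μ1 z'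

/-- The belief process generated from the Bayes updates by a belief-Markov strategy. -/
noncomputable def Bel (μ1 : PMF M) (K : ℕ → M → G → PMF M) (h : ℕ → M → N → Y)
    (ν : ℕ → PMF N) (ψstar : ℕ → (M → ℝ≥0∞) → G) :
    (t : ℕ) → (Fin (t + 1) → Y) → (M → ℝ≥0∞)
  | 0 => fun ys => initBel μ1 h ν (ys 0)
  | t + 1 => fun ys =>
      let π := Bel μ1 K h ν ψstar t (fun s => ys s.castSucc)
      bayes K h ν t π (ψstar t π) (ys (Fin.last (t + 1)))

namespace PMF

variable {α β : Type*} [Fintype α] [Fintype β]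

lemma sum_bind_mul (p : PMF α) (f : α → PMF β) (F : β → ℝ≥0∞) :
    ∑ b, p.bind f b * F b = ∑ a, p a * ∑ b, f a b * F b := by
  simp only [bind_apply, tsum_fintype, Finset.sum_mul, Finset.mul_sum, mul_assoc]
  exact Finset.sum_comm

lemma sum_map_mul (p : PMF α) (g : α → β) (F : β → ℝ≥0∞) :
    ∑ b, p.map g b * F b = ∑ a, p a * F (g a) := by
  classical
  simp only [map_apply, tsum_fintype, Finset.sum_mul, ite_mul, zero_mul]
  rw [Finset.sum_comm]
  simp

lemma sum_coe (p : PMF α) : ∑ a, p a = 1 := by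
  rw [← tsum_fintype (L := .unconditional _), p.tsum_coe]

end PMF

lemma sum_toReal_mul_eq_of_sum_fiber {α β : Type*} [Fintype α] [Fintype β] [DecidableEq β]
    {p : α → ℝ≥0∞} (hp : ∀ a, p a ≠ ⊤) (g : α → β) {w : β → ℝ≥0∞}
    (hw : ∀ b, ∑ a ∈ Finset.univ.filter (fun a => g a = b), p a = w b) (f : β → ℝ) :
    ∑ a, (p a).toReal * f (g a) = ∑ b, (w b).toReal * f b := by
  rw [← Finset.sum_fiberwise Finset.univ g]
  refine Finset.sum_congr rfl fun b _ => ?_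
  rw [← hw, ENNReal.toReal_sum fun a _ => hp a, Finset.sum_mul]
  exact Finset.sum_congr rfl fun a ha => by rw [(Finset.mem_filter.1 ha).2]

section Telescope

variable {α : Type*} [AddCommGroup α] {a b : ℕ → α} {T : ℕ}

lemma le_sum_range_of_le_add_succ [PartialOrder α] [IsOrderedAddMonoid α] (hT : a T = 0)
    (h : ∀ t < T, a t ≤ b t + a (t + 1)) : a 0 ≤ ∑ t ∈ Finset.range T, b t := by
  calc a 0 = ∑ t ∈ Finset.range T, (a t - a (t + 1)) := by rw [Finset.sum_range_sub', hT, sub_zero]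
    _ ≤ ∑ t ∈ Finset.range T, b t := Finset.sum_le_sum fun t ht =>
        sub_le_iff_le_add.2 (h t (Finset.mem_range.1 ht))

lemma eq_sum_range_of_eq_add_succ (hT : a T = 0) (h : ∀ t < T, a t = b t + a (t + 1)) :
    a 0 = ∑ t ∈ Finset.range T, b t := by
  calc a 0 = ∑ t ∈ Finset.range T, (a t - a (t + 1)) := by rw [Finset.sum_range_sub', hT, sub_zero]
    _ = ∑ t ∈ Finset.range T, b t := Finset.sum_congr rfl fun t ht =>
        sub_eq_iff_eq_add.2 (h t (Finset.mem_range.1 ht))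

end Telescope

lemma Fin.sum_univ_snoc {α β : Type*} [Fintype α] [AddCommMonoid β] {n : ℕ}
    (f : (Fin (n + 1) → α) → β) : ∑ x, f x = ∑ xs : Fin n → α, ∑ a, f (Fin.snoc xs a) := by
  rw [← Fintype.sum_equiv (Fin.snocEquiv fun _ => α) _ f fun _ => rfl, Fintype.sum_prod_type,
    Finset.sum_comm]
  rfl

section BeliefUpdate

omit [DecidableEq M] [Fintype G] [Nonempty G]

variable {K : ℕ → M → G → PMF M} {h : ℕ → M → N → Y} {ν : ℕ → PMF N} {t : ℕ}

omit [Fintype M] [Fintype Y] in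
lemma obsP_eq_map_apply (y : Y) (z : M) : obsP h ν t y z = (ν t).map (h t z) y := by
  simp only [obsP, PMF.map_apply, tsum_fintype, Finset.sum_filter, eq_comm]
  congr!

omit [Fintype M] in
lemma sum_obsP_mul (z : M) (g : Y → ℝ≥0∞) :
    ∑ y, obsP h ν t y z * g y = ∑ n, ν t n * g (h t z n) := by
  simp only [obsP_eq_map_apply]
  exact PMF.sum_map_mul _ _ _

variable (p : ℝ≥0∞) (π : M → ℝ≥0∞) (γ : G)

lemma ctil_smul (c : ℕ → M → G → ℝ) : ctil c t (p • π) γ = p.toReal * ctil c t π γ := by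
  simp [ctil, Finset.mul_sum, mul_assoc]

lemma pred_smul (z' : M) : pred K t (p • π) γ z' = p * pred K t π γ z' := by
  simp [pred, Finset.mul_sum, mul_assoc]

omit [Fintype Y] in
lemma Pobs_smul (y : Y) : Pobs K h ν t (p • π) γ y = p * Pobs K h ν t π γ y := by
  simp [Pobs, pred_smul, Finset.mul_sum, mul_assoc]

omit [Fintype Y] in
lemma bayes_smul {p : ℝ≥0∞} (hp₀ : p ≠ 0) (hp : p ≠ ⊤) :
    bayes K h ν t (p • π) γ = bayes K h ν t π γ := by
  funext y z'
  simp only [bayes, pred_smul, Pobs_smul, mul_left_comm _ p]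
  exact ENNReal.mul_div_mul_left _ _ hp₀ hp

end BeliefUpdate

section Filter

omit [DecidableEq M] [Fintype G] [Nonempty G]

variable (μ1 : PMF M) (K : ℕ → M → G → PMF M) (h : ℕ → M → N → Y) (ν : ℕ → PMF N)
  (ψ : (t : ℕ) → (Fin (t + 1) → Y) → G)

noncomputable def jointProb : (t : ℕ) → (Fin (t + 1) → Y) → M → ℝ≥0∞
  | 0 => fun ys z => μ1 z * obsP h ν 0 (ys 0) z
  | t + 1 => fun ys z' =>
      pred K t (jointProb t (Fin.init ys)) (ψ t (Fin.init ys)) z' *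
        obsP h ν (t + 1) (ys (Fin.last (t + 1))) z'

noncomputable def obsHistProb (t : ℕ) (ys : Fin (t + 1) → Y) : ℝ≥0∞ :=
  ∑ z, jointProb μ1 K h ν ψ t ys z

noncomputable def posterior (t : ℕ) (ys : Fin (t + 1) → Y) : M → ℝ≥0∞ :=
  fun z => jointProb μ1 K h ν ψ t ys z / obsHistProb μ1 K h ν ψ t ys

variable {μ1 K h ν ψ} {t : ℕ}

omit [Fintype Y] in
lemma jointProb_snoc (ys : Fin (t + 1) → Y) (y : Y) (z' : M) :
    jointProb μ1 K h ν ψ (t + 1) (Fin.snoc ys y) z' =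
      pred K t (jointProb μ1 K h ν ψ t ys) (ψ t ys) z' * obsP h ν (t + 1) y z' := by
  simp only [jointProb, Fin.init_snoc, Fin.snoc_last]

lemma sum_histPO_zero_mul (F : (Fin 1 → Y) → M → ℝ≥0∞) :
    ∑ tr, histPO μ1 K h ν ψ 0 tr * F (fun s => (tr s).2) (tr (Fin.last 0)).1 =
      ∑ ys, ∑ z, jointProb μ1 K h ν ψ 0 ys z * F ys z := by
  rw [← Fintype.sum_equiv (Equiv.funUnique (Fin 1) Y).symm (fun y => ∑ z,
    jointProb μ1 K h ν ψ 0 (fun _ => y) z * F (fun _ => y) z) _ fun _ => rfl, Finset.sum_comm]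
  simp only [histPO, PMF.sum_bind_mul, PMF.sum_map_mul, jointProb, Fin.last_zero, mul_assoc,
    ← Finset.mul_sum, sum_obsP_mul]

lemma sum_histPO_succ_mul (F : (Fin (t + 2) → Y) → M → ℝ≥0∞) :
    ∑ tr, histPO μ1 K h ν ψ (t + 1) tr * F (fun s => (tr s).2) (tr (Fin.last (t + 1))).1 =
      ∑ tr, histPO μ1 K h ν ψ t tr *
        ∑ z', K t (tr (Fin.last t)).1 (ψ t fun s => (tr s).2) z' *
          ∑ y, obsP h ν (t + 1) y z' * F (Fin.snoc (fun s => (tr s).2) y) z' := by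
  have obs_snoc (tr : Fin (t + 1) → M × Y) (x : M × Y) :
      (fun s => ((Fin.snoc tr x : Fin (t + 2) → M × Y) s).2) =
        Fin.snoc (fun s => (tr s).2) x.2 := by
    funext s
    refine Fin.lastCases ?_ (fun i => ?_) s <;> simp
  simp only [histPO, PMF.sum_bind_mul, PMF.sum_map_mul, sum_obsP_mul, obs_snoc, Fin.snoc_last]

lemma sum_jointProb_succ_mul (F : (Fin (t + 2) → Y) → M → ℝ≥0∞) :
    ∑ ys, ∑ z, jointProb μ1 K h ν ψ t ys z *
        ∑ z', K t z (ψ t ys) z' * ∑ y, obsP h ν (t + 1) y z' * F (Fin.snoc ys y) z' =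
      ∑ ys, ∑ z', jointProb μ1 K h ν ψ (t + 1) ys z' * F ys z' := by
  rw [Fin.sum_univ_snoc (n := t + 1)]
  refine Finset.sum_congr rfl fun ys _ => ?_
  simp only [jointProb_snoc, pred, Finset.mul_sum, Finset.sum_mul]
  rw [Finset.sum_comm, Finset.sum_comm (γ := Y)]
  refine Finset.sum_congr rfl fun z' _ => ?_
  rw [Finset.sum_comm]
  exact Finset.sum_congr rfl fun _ _ => Finset.sum_congr rfl fun _ _ => by ring

lemma sum_histPO_mul (F : (Fin (t + 1) → Y) → M → ℝ≥0∞) :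
    ∑ tr, histPO μ1 K h ν ψ t tr * F (fun s => (tr s).2) (tr (Fin.last t)).1 =
      ∑ ys, ∑ z, jointProb μ1 K h ν ψ t ys z * F ys z := by
  induction t with
  | zero => exact sum_histPO_zero_mul F
  | succ t ih =>
    rw [sum_histPO_succ_mul, ← sum_jointProb_succ_mul]
    exact ih fun ys z => ∑ z', K t z (ψ t ys) z' * ∑ y, obsP h ν (t + 1) y z' * F (Fin.snoc ys y) z'

lemma sum_histPO_filter_obs (ys : Fin (t + 1) → Y) :
    ∑ tr ∈ Finset.univ.filter (fun tr : Fin (t + 1) → M × Y => ∀ s, (tr s).2 = ys s),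
      histPO μ1 K h ν ψ t tr = obsHistProb μ1 K h ν ψ t ys := by
  have := sum_histPO_mul (μ1 := μ1) (K := K) (h := h) (ν := ν) (ψ := ψ)
    fun ys' _ => if ys' = ys then 1 else 0
  rw [Finset.sum_filter]
  simpa [← funext_iff, obsHistProb] using this

lemma obsHistProb_ne_top (ys : Fin (t + 1) → Y) : obsHistProb μ1 K h ν ψ t ys ≠ ⊤ := by
  refine ne_top_of_le_ne_top ENNReal.one_ne_top ?_
  rw [← sum_histPO_filter_obs, ← (histPO μ1 K h ν ψ t).sum_coe]
  exact Finset.sum_le_sum_of_subset (Finset.filter_subset _ _)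

lemma jointProb_eq_smul_posterior (ys : Fin (t + 1) → Y) :
    jointProb μ1 K h ν ψ t ys = obsHistProb μ1 K h ν ψ t ys • posterior μ1 K h ν ψ t ys := by
  funext z
  refine (ENNReal.mul_div_cancel' (fun h0 => ?_) (fun h0 => ?_)).symm
  · exact Finset.sum_eq_zero_iff.1 h0 z (Finset.mem_univ z)
  · exact absurd h0 (obsHistProb_ne_top ys)

omit [Fintype Y] in
lemma posterior_zero (ys : Fin 1 → Y) :
    posterior μ1 K h ν ψ 0 ys = initBel μ1 h ν (ys 0) := by
  funext z
  simp only [posterior, obsHistProb, jointProb, initBel, mul_comm]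

omit [Fintype Y] in
lemma obsHistProb_snoc_eq_Pobs (ys : Fin (t + 1) → Y) (y : Y) :
    obsHistProb μ1 K h ν ψ (t + 1) (Fin.snoc ys y) =
      Pobs K h ν t (jointProb μ1 K h ν ψ t ys) (ψ t ys) y := by
  simp only [obsHistProb, jointProb_snoc, Pobs]

lemma obsHistProb_snoc (ys : Fin (t + 1) → Y) (y : Y) :
    obsHistProb μ1 K h ν ψ (t + 1) (Fin.snoc ys y) =
      obsHistProb μ1 K h ν ψ t ys * Pobs K h ν t (posterior μ1 K h ν ψ t ys) (ψ t ys) y := by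
  rw [obsHistProb_snoc_eq_Pobs, jointProb_eq_smul_posterior, Pobs_smul]

lemma posterior_snoc {ys : Fin (t + 1) → Y} (hp : obsHistProb μ1 K h ν ψ t ys ≠ 0) (y : Y) :
    posterior μ1 K h ν ψ (t + 1) (Fin.snoc ys y) =
      bayes K h ν t (posterior μ1 K h ν ψ t ys) (ψ t ys) y := by
  rw [← bayes_smul _ _ hp (obsHistProb_ne_top ys), ← jointProb_eq_smul_posterior]
  funext z'
  rw [posterior, jointProb_snoc, obsHistProb_snoc_eq_Pobs, bayes, mul_comm]

lemma Bel_eq_posterior {ψstar : ℕ → (M → ℝ≥0∞) → G} {ys : Fin (t + 1) → Y}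
    (hp : obsHistProb μ1 K h ν (fun t ys => ψstar t (Bel μ1 K h ν ψstar t ys)) t ys ≠ 0) :
    Bel μ1 K h ν ψstar t ys =
      posterior μ1 K h ν (fun t ys => ψstar t (Bel μ1 K h ν ψstar t ys)) t ys := by
  induction t with
  | zero => rw [posterior_zero]; rfl
  | succ t ih =>
    rw [← Fin.snoc_init_self ys, obsHistProb_snoc] at hp
    have hp_init := left_ne_zero_of_mul hp
    conv_rhs => rw [← Fin.snoc_init_self ys, posterior_snoc hp_init, ← ih hp_init]
    rfl

end Filter

section StageCost

omit [Fintype G] [Nonempty G]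

variable (μ1 : PMF M) (K : ℕ → M → G → PMF M) (c : ℕ → M → G → ℝ) (h : ℕ → M → N → Y)
  (ν : ℕ → PMF N) (ψ : (t : ℕ) → (Fin (t + 1) → Y) → G)

noncomputable def expectedStageCost (t : ℕ) : ℝ :=
  ∑ ys, (obsHistProb μ1 K h ν ψ t ys).toReal * ctil c t (posterior μ1 K h ν ψ t ys) (ψ t ys)

variable {μ1 K c h ν ψ} {T t : ℕ}

lemma sum_histPO_filter_eq_jointProb (x : (Fin (t + 1) → Y) × M) :
    ∑ tr ∈ Finset.univ.filter (fun tr => ((fun s => (tr s).2), (tr (Fin.last t)).1) = x),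
      histPO μ1 K h ν ψ t tr = jointProb μ1 K h ν ψ t x.1 x.2 := by
  obtain ⟨ys, z⟩ := x
  have := sum_histPO_mul (μ1 := μ1) (K := K) (h := h) (ν := ν) (ψ := ψ)
    fun ys' z' => if ys' = ys ∧ z' = z then 1 else 0
  simpa [Finset.sum_filter, ite_and] using this

lemma Jpo_eq_sum_expectedStageCost :
    Jpo T μ1 K c h ν ψ = ∑ t ∈ Finset.range T, expectedStageCost μ1 K c h ν ψ t := by
  refine Finset.sum_congr rfl fun t _ => ?_
  refine (sum_toReal_mul_eq_of_sum_fiber (fun _ => PMF.apply_ne_top _ _)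
    (fun tr : Fin (t + 1) → M × Y => ((fun s => (tr s).2), (tr (Fin.last t)).1))
    sum_histPO_filter_eq_jointProb
    fun x => c t x.2 (ψ t x.1)).trans ?_
  rw [Fintype.sum_prod_type]
  refine Finset.sum_congr rfl fun ys _ => ?_
  rw [← ctil_smul, ← jointProb_eq_smul_posterior]
  rfl

end StageCost

section DynamicProgram

omit [DecidableEq M]

variable (T : ℕ) (μ1 : PMF M) (K : ℕ → M → G → PMF M) (c : ℕ → M → G → ℝ)
  (h : ℕ → M → N → Y) (ν : ℕ → PMF N) (ψ : (t : ℕ) → (Fin (t + 1) → Y) → G)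

noncomputable def qValue (t : ℕ) (π : M → ℝ≥0∞) (γ : G) : ℝ :=
  ctil c t π γ +
    ∑ y ∈ Finset.univ.filter (fun y => 0 < Pobs K h ν t π γ y),
      (Pobs K h ν t π γ y).toReal * V T K c h ν (t + 1) (bayes K h ν t π γ y)

noncomputable def expectedValue (t : ℕ) : ℝ :=
  ∑ ys, (obsHistProb μ1 K h ν ψ t ys).toReal * V T K c h ν t (posterior μ1 K h ν ψ t ys)

variable {T μ1 K c h ν ψ} {t : ℕ}

lemma V_le_qValue (ht : t < T) (π : M → ℝ≥0∞) (γ : G) :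
    V T K c h ν t π ≤ qValue T K c h ν t π γ := by
  rw [V, if_pos ht]
  exact Finset.inf'_le _ (Finset.mem_univ γ)

lemma expectedValue_self : expectedValue T μ1 K c h ν ψ T = 0 := by
  simp [expectedValue, V]

lemma expectedValue_zero :
    expectedValue T μ1 K c h ν ψ 0 =
      ∑ y, (∑ z, obsP h ν 0 y z * μ1 z).toReal * V T K c h ν 0 (initBel μ1 h ν y) := by
  refine Fintype.sum_equiv (Equiv.funUnique (Fin 1) Y) _ _ fun ys => ?_
  simp only [obsHistProb, jointProb, posterior_zero, mul_comm, Equiv.funUnique_apply]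
  rfl

lemma expectedValue_succ :
    expectedValue T μ1 K c h ν ψ (t + 1) =
      ∑ ys, (obsHistProb μ1 K h ν ψ t ys).toReal *
        ∑ y ∈ Finset.univ.filter
            (fun y => 0 < Pobs K h ν t (posterior μ1 K h ν ψ t ys) (ψ t ys) y),
          (Pobs K h ν t (posterior μ1 K h ν ψ t ys) (ψ t ys) y).toReal *
            V T K c h ν (t + 1) (bayes K h ν t (posterior μ1 K h ν ψ t ys) (ψ t ys) y) := by
  rw [expectedValue, Fin.sum_univ_snoc]
  refine Finset.sum_congr rfl fun ys _ => ?_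
  rw [Finset.sum_filter_of_ne fun y _ hy => pos_iff_ne_zero.2 fun h0 => hy (by simp [h0]),
    Finset.mul_sum]
  refine Finset.sum_congr rfl fun y _ => ?_
  by_cases hp : obsHistProb μ1 K h ν ψ t ys = 0
  · simp [obsHistProb_snoc, hp]
  · rw [obsHistProb_snoc, posterior_snoc hp, ENNReal.toReal_mul, mul_assoc]

lemma sum_mul_qValue_posterior :
    ∑ ys, (obsHistProb μ1 K h ν ψ t ys).toReal *
        qValue T K c h ν t (posterior μ1 K h ν ψ t ys) (ψ t ys) =
      expectedStageCost μ1 K c h ν ψ t + expectedValue T μ1 K c h ν ψ (t + 1) := by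
  simp only [qValue, mul_add, Finset.sum_add_distrib, expectedValue_succ]
  rfl

lemma expectedValue_le (ht : t < T) :
    expectedValue T μ1 K c h ν ψ t ≤
      expectedStageCost μ1 K c h ν ψ t + expectedValue T μ1 K c h ν ψ (t + 1) := by
  rw [← sum_mul_qValue_posterior]
  exact Finset.sum_le_sum fun _ _ =>
    mul_le_mul_of_nonneg_left (V_le_qValue ht _ _) ENNReal.toReal_nonneg

lemma expectedValue_eq
    (hopt : ∀ ys, obsHistProb μ1 K h ν ψ t ys ≠ 0 →
      V T K c h ν t (posterior μ1 K h ν ψ t ys) =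
        qValue T K c h ν t (posterior μ1 K h ν ψ t ys) (ψ t ys)) :
    expectedValue T μ1 K c h ν ψ t =
      expectedStageCost μ1 K c h ν ψ t + expectedValue T μ1 K c h ν ψ (t + 1) := by
  rw [← sum_mul_qValue_posterior]
  refine Finset.sum_congr rfl fun ys _ => ?_
  by_cases hp : obsHistProb μ1 K h ν ψ t ys = 0
  · simp [hp]
  · rw [hopt ys hp]

end DynamicProgram

/-- Theorem 2 (dynamic program for partially observed mean-field sharing): (i) the expected
total cost of any observation-feedback strategy is at least `E[V_1(Π_1)]`; (ii) any strategy
that, at each time and each realizable belief, picks a prescription attaining the minimum in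
the dynamic program achieves this bound — so beliefs `Π_t` form an information state and
strategies of the form `Γ_t = ψ_t(Π_t)` entail no loss of optimality. -/
theorem stmt11 (T : ℕ) (μ1 : PMF M) (K : ℕ → M → G → PMF M) (c : ℕ → M → G → ℝ)
    (h : ℕ → M → N → Y) (ν : ℕ → PMF N) :
    (∀ ψ : (t : ℕ) → (Fin (t + 1) → Y) → G,
      (∑ y : Y, (∑ z : M, obsP h ν 0 y z * μ1 z).toReal *
          V T K c h ν 0 (initBel μ1 h ν y))
        ≤ Jpo T μ1 K c h ν ψ) ∧
    (∀ ψstar : ℕ → (M → ℝ≥0∞) → G,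
      (∀ t < T, ∀ ys : Fin (t + 1) → Y,
        0 < (∑ tr ∈ Finset.univ.filter
            (fun tr : Fin (t + 1) → (M × Y) => ∀ s, (tr s).2 = ys s),
            histPO μ1 K h ν
              (fun t' ys' => ψstar t' (Bel μ1 K h ν ψstar t' ys')) t tr) →
        V T K c h ν t (Bel μ1 K h ν ψstar t ys) =
          ctil c t (Bel μ1 K h ν ψstar t ys) (ψstar t (Bel μ1 K h ν ψstar t ys)) +
            ∑ y ∈ Finset.univ.filter
              (fun y => 0 < Pobs K h ν t (Bel μ1 K h ν ψstar t ys)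
                (ψstar t (Bel μ1 K h ν ψstar t ys)) y),
              (Pobs K h ν t (Bel μ1 K h ν ψstar t ys)
                  (ψstar t (Bel μ1 K h ν ψstar t ys)) y).toReal *
                V T K c h ν (t + 1)
                  (bayes K h ν t (Bel μ1 K h ν ψstar t ys)
                    (ψstar t (Bel μ1 K h ν ψstar t ys)) y)) →
      Jpo T μ1 K c h ν (fun t ys => ψstar t (Bel μ1 K h ν ψstar t ys))
        = ∑ y : Y, (∑ z : M, obsP h ν 0 y z * μ1 z).toReal *
            V T K c h ν 0 (initBel μ1 h ν y)) := by
  refine ⟨fun ψ => ?_, fun ψstar hopt => ?_⟩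
  · rw [Jpo_eq_sum_expectedStageCost, ← expectedValue_zero (ψ := ψ)]
    exact le_sum_range_of_le_add_succ expectedValue_self fun t ht => expectedValue_le ht
  · rw [Jpo_eq_sum_expectedStageCost, ← expectedValue_zero]
    refine (eq_sum_range_of_eq_add_succ expectedValue_self fun t ht =>
      expectedValue_eq fun ys hp => ?_).symm
    rw [← Bel_eq_posterior hp]
    refine hopt t ht ys ?_
    rw [sum_histPO_filter_obs]
    exact pos_iff_ne_zero.2 hp
end

section
/- (Example of Section I-D: symmetric strategies are strictly suboptimal.) Let n ≥ 2 and let X^1,…,X^n be i.i.d. random variables, each uniform on Fin n. For ANY function g : (Fin n → ℕ) → Fin n → Fin n, define U^i := g(emp(X))(X^i), where emp(X)(a) = |{i : X^i = a}|. Then the probability that the map i ↦ U^i is injective (equivalently, that the empirical count vector of U is identically 1) is at most 1 − n^{1−n}, and in particular strictly less than 1. By contrast, the asymmetric choice U^i := i makes the map i ↦ U^i injective with probability 1. Hence, for the cost K·1(emp(U) ≠ (1,…,1)) with K > 0, every symmetric strategy incurs expected cost at least K·n^{1−n} > 0 while an asymmetric strategy incurs cost 0. -/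
open scoped ENNReal

/-- The law of `n` i.i.d. coordinates, each uniform on `Fin n`. -/
noncomputable def unifProfile (n : ℕ) (hn : 0 < n) : PMF (Fin n → Fin n) :=
  haveI : NeZero n := ⟨hn.ne'⟩
  iid n (PMF.uniformOfFintype (Fin n))

/-!
The `n` constant profiles `x ≡ c` have total mass `n · n^{-n} = n^{1-n}`. On such a profile every
controller sees the same mean field and the same local state, so a symmetric strategy makes all
actions equal, which for `n ≥ 2` is not injective and hence has empirical counts different from
`(1, …, 1)`.
-/

open Finset

lemma unifProfile_apply {n : ℕ} (hn : 0 < n) (x : Fin n → Fin n) :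
    unifProfile n hn x = ((n : ℝ≥0∞) ^ n)⁻¹ := by
  have : NeZero n := ⟨hn.ne'⟩
  simp [unifProfile, iid, PMF.ofFintype_apply, PMF.uniformOfFintype_apply, ENNReal.inv_pow]

lemma injective_iff_forall_emp_le_one {X : Type*} [DecidableEq X] {n : ℕ} (x : Fin n → X) :
    Function.Injective x ↔ ∀ a, emp x a ≤ 1 := by
  simp only [emp, card_le_one, mem_filter, mem_univ, true_and]
  exact ⟨fun h a i hi j hj => h (hi.trans hj.symm), fun h i j hij => h _ i hij j rfl⟩

lemma emp_eq_one_of_bijective {X : Type*} [DecidableEq X] {n : ℕ} {x : Fin n → X}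
    (hx : Function.Bijective x) : emp x = fun _ => 1 := by
  funext a
  obtain ⟨i, rfl⟩ := hx.2 a
  rw [emp, card_eq_one]
  exact ⟨i, by ext j; simp [hx.1.eq_iff]⟩

def constProfiles (n : ℕ) (X : Type*) [Fintype X] [DecidableEq X] : Finset (Fin n → X) :=
  univ.image fun c _ => c

lemma not_injective_of_mem_constProfiles {X : Type*} [Fintype X] [DecidableEq X] {n : ℕ}
    (hn : 2 ≤ n) (g : (X → ℕ) → X → X) {x : Fin n → X} (hx : x ∈ constProfiles n X) :
    ¬ Function.Injective fun i => g (emp x) (x i) := by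
  have := Fin.nontrivial_iff_two_le.2 hn
  obtain ⟨c, -, rfl⟩ := mem_image.1 hx
  exact Function.not_injective_const

lemma sum_unifProfile_constProfiles {n : ℕ} (hn : 0 < n) :
    ∑ x ∈ constProfiles n (Fin n), unifProfile n hn x = ((n : ℝ≥0∞) ^ (n - 1))⁻¹ := by
  have hconst : Function.Injective fun (c : Fin n) (_ : Fin n) => c :=
    fun a b h => congrFun h ⟨0, hn⟩
  have hn0 : (n : ℝ≥0∞) ≠ 0 := by exact_mod_cast hn.ne'
  rw [constProfiles, sum_image fun a _ b _ h => hconst h]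
  simp only [unifProfile_apply, sum_const, card_univ, Fintype.card_fin, nsmul_eq_mul]
  obtain ⟨m, rfl⟩ : ∃ m, n = m + 1 := ⟨n - 1, by omega⟩
  rw [Nat.add_sub_cancel, ENNReal.inv_pow, ENNReal.inv_pow, pow_succ', ← mul_assoc,
    ENNReal.mul_inv_cancel hn0 (by simp), one_mul]

lemma PMF.sum_le_one_sub_sum_of_disjoint {α : Type*} (p : PMF α) {s t : Finset α}
    (hst : Disjoint s t) : ∑ x ∈ s, p x ≤ 1 - ∑ x ∈ t, p x := by
  classical
  have hunion : ∑ x ∈ s, p x + ∑ x ∈ t, p x ≤ 1 := by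
    rw [← sum_union hst, ← p.tsum_coe]
    exact ENNReal.sum_le_tsum _
  exact ENNReal.le_sub_of_add_le_right (ne_top_of_le_ne_top ENNReal.one_ne_top
    (le_add_self.trans hunion)) hunion

lemma PMF.mul_toReal_sum_le_sum_toReal_mul {α : Type*} [Fintype α] (p : PMF α) {s : Finset α}
    {f : α → ℝ} {K : ℝ} (hf : ∀ x, 0 ≤ f x) (hs : ∀ x ∈ s, K ≤ f x) :
    K * (∑ x ∈ s, p x).toReal ≤ ∑ x, (p x).toReal * f x := by
  rw [ENNReal.toReal_sum fun x _ => p.apply_ne_top x, mul_sum]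
  calc ∑ x ∈ s, K * (p x).toReal ≤ ∑ x ∈ s, (p x).toReal * f x :=
        sum_le_sum fun x hx => by rw [mul_comm]; gcongr; exact hs x hx
    _ ≤ ∑ x, (p x).toReal * f x :=
        sum_le_sum_of_subset_of_nonneg (subset_univ s) fun x _ _ =>
          mul_nonneg ENNReal.toReal_nonneg (hf x)

/-- For i.i.d. uniform local states and ANY symmetric strategy `g` (each controller applies the
same function of the mean field and its local state), the probability that the resulting action
profile is injective is at most `1 - n^{1-n} < 1`; the asymmetric choice `U^i = i` is injective
(with probability one), and for the cost `K·1(emp U ≠ (1,…,1))` every symmetric strategy incurs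
expected cost at least `K·n^{1-n} > 0`, while the asymmetric strategy incurs cost `0`. -/
theorem stmt14 (n : ℕ) (hn : 2 ≤ n) (g : (Fin n → ℕ) → Fin n → Fin n) (K : ℝ) (hK : 0 < K) :
    (∑ x ∈ Finset.univ.filter
        (fun x : Fin n → Fin n => Function.Injective (fun i => g (emp x) (x i))),
        unifProfile n (by omega) x) ≤ 1 - ((n : ℝ≥0∞) ^ (n - 1))⁻¹ ∧
    (∑ x ∈ Finset.univ.filter
        (fun x : Fin n → Fin n => Function.Injective (fun i => g (emp x) (x i))),
        unifProfile n (by omega) x) < 1 ∧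
    Function.Injective (fun i : Fin n => i) ∧
    (emp (fun i : Fin n => i)) = (fun _ => 1) ∧
    K * ((n : ℝ) ^ (n - 1))⁻¹ ≤
      ∑ x : Fin n → Fin n, (unifProfile n (by omega) x).toReal *
        (if emp (fun i => g (emp x) (x i)) = (fun _ => 1) then 0 else K) ∧
    0 < K * ((n : ℝ) ^ (n - 1))⁻¹ := by
  have hn0 : 0 < n := by omega
  have hconst := sum_unifProfile_constProfiles hn0
  have hdisj : Disjoint (univ.filter fun x : Fin n → Fin n => Function.Injective
      fun i => g (emp x) (x i)) (constProfiles n (Fin n)) :=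
    disjoint_left.2 fun x hx hxC =>
      not_injective_of_mem_constProfiles hn g hxC (mem_filter.1 hx).2
  have hinj := (PMF.sum_le_one_sub_sum_of_disjoint _ hdisj).trans_eq (by rw [hconst])
  refine ⟨hinj, hinj.trans_lt ?_, Function.injective_id,
    emp_eq_one_of_bijective Function.bijective_id, ?_, by positivity⟩
  · exact ENNReal.sub_lt_self ENNReal.one_ne_top one_ne_zero (by simp)
  · have hcost : ∀ x ∈ constProfiles n (Fin n),
        K ≤ if emp (fun i => g (emp x) (x i)) = (fun _ => 1) then 0 else K := fun x hx => by
      rw [if_neg fun h => not_injective_of_mem_constProfiles hn g hx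
        ((injective_iff_forall_emp_le_one _).2 fun a => (congrFun h a).le)]
    calc K * ((n : ℝ) ^ (n - 1))⁻¹
        = K * (∑ x ∈ constProfiles n (Fin n), unifProfile n hn0 x).toReal := by
          rw [hconst, ENNReal.toReal_inv, ENNReal.toReal_pow, ENNReal.toReal_natCast]
      _ ≤ _ := PMF.mul_toReal_sum_le_sum_toReal_mul _
          (fun x => by split_ifs <;> [exact le_rfl; exact hK.le]) hcost
end
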